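/- Let i : B → A be a k-linear X-functor from a diagonal k-linear category B to a k-linear category A, and assume A is locally finite as a left B-module, i.e. each A_{xy} is finitely generated projective as a left B_x-module. Let 𝒜 = _B End(A) be the left endocluster, with 𝒜^x_{yz} = _{B_x}Hom(A_{xy}, A_{xz}). Then the categories Desc_B(A) of descent data and M_𝒜 of right 𝒜-modules are isomorphic, via the functor H sending a descent datum (M, σ) to M with action m·f = m_{<0>} f(m_{<1>}) ∈ M_{xz} for m ∈ M_{xy}, f ∈ 𝒜^x_{yz}, the inverse functor being defined using dual bases (Σ_i e_i* ⊗_{B_x} e_i for A_{xy}) by σ_{xy}(m) = Σ_i m·(i_x ∘ e_i*) ⊗_{B_x} e_i. -/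

import Mathlib

/-!
The functor `H` turns `σ` into the action `m · f = m₍₀₎ f(m₍₁₎)`: condition (c3) makes it unital
and, after (c1) rewrites `σ(m · f)`, condition (c2) makes it associative. For the inverse, the dual
basis expresses every `B_x`-linear `f : A_{xy} → A_{xz}` in the endocluster as
`f = ∑ⱼ (i_x ∘ eⱼ*) · r_{f(eⱼ)}`, where `r_a` is right multiplication by `a`; for `f = id` this is
(c3) of the reconstructed descent map. Applied to `m · f`, the same expansion gives
`σ(m · f) = ∑ⱼ m·(i_x ∘ eⱼ*) ⊗ f(eⱼ)`, which for `f = r_a` is (c1) and for `f = i_x ∘ eₗ*` is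
`σ(m · f) = m · f ⊗ 1`, hence (c2). The composites `KH` and `HK` are the identity by
`∑ⱼ i_x(eⱼ*(a)) eⱼ = a` and by the expansion of `f`, respectively.
-/
open TensorProduct BigOperators
noncomputable section
namespace Paper
variable (k : Type) [CommRing k]

structure KCat (X : Type) where
  M : X → X → Type
  [acg : ∀ x y, AddCommGroup (M x y)]
  [mod : ∀ x y, Module k (M x y)]
  mul : ∀ {x y z : X}, M x y → M y z → M x z
  one : ∀ x : X, M x x
  add_mul : ∀ {x y z : X} (a a' : M x y) (b : M y z), mul (a + a') b = mul a b + mul a' b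
  smul_mul : ∀ {x y z : X} (c : k) (a : M x y) (b : M y z), mul (c • a) b = c • mul a b
  mul_add : ∀ {x y z : X} (a : M x y) (b b' : M y z), mul a (b + b') = mul a b + mul a b'
  mul_smul : ∀ {x y z : X} (c : k) (a : M x y) (b : M y z), mul a (c • b) = c • mul a b
  mul_assoc : ∀ {x y z w : X} (a : M x y) (b : M y z) (c : M z w),
    mul (mul a b) c = mul a (mul b c)
  one_mul : ∀ {x y : X} (a : M x y), mul (one x) a = a
  mul_one : ∀ {x y : X} (a : M x y), mul a (one y) = a
attribute [instance] KCat.acg KCat.mod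
variable {k}
def KCat.mulLin {X : Type} (A : KCat k X) (x y z : X) :
    A.M x y →ₗ[k] A.M y z →ₗ[k] A.M x z :=
  LinearMap.mk₂ k A.mul A.add_mul A.smul_mul A.mul_add A.mul_smul
@[simp] theorem KCat.mulLin_apply {X : Type} (A : KCat k X) (x y z : X)
    (a : A.M x y) (b : A.M y z) : A.mulLin x y z a b = A.mul a b := rfl
variable (k)
def relSub {S M N : Type} [AddCommGroup M] [Module k M] [AddCommGroup N] [Module k N]
    (ρ : M → S → M) (lam : S → N → N) : Submodule k (M ⊗[k] N) :=
  Submodule.span k {t | ∃ m b n, t = ρ m b ⊗ₜ[k] n - m ⊗ₜ[k] lam b n}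
abbrev BT {S M N : Type} [AddCommGroup M] [Module k M] [AddCommGroup N] [Module k N]
    (ρ : M → S → M) (lam : S → N → N) : Type :=
  (M ⊗[k] N) ⧸ relSub k ρ lam
def btmk {S M N : Type} [AddCommGroup M] [Module k M] [AddCommGroup N] [Module k N]
    (ρ : M → S → M) (lam : S → N → N) : M →ₗ[k] N →ₗ[k] BT k ρ lam :=
  (TensorProduct.mk k M N).compr₂ (relSub k ρ lam).mkQ
theorem btmk_rel {S M N : Type} [AddCommGroup M] [Module k M] [AddCommGroup N] [Module k N]
    (ρ : M → S → M) (lam : S → N → N) (m : M) (b : S) (n : N) :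
    btmk k ρ lam (ρ m b) n = btmk k ρ lam m (lam b n) := by
  show (relSub k ρ lam).mkQ _ = (relSub k ρ lam).mkQ _
  rw [Submodule.mkQ_apply, Submodule.mkQ_apply, Submodule.Quotient.eq]
  exact Submodule.subset_span ⟨m, b, n, rfl⟩
def btDesc {S M N P : Type} [AddCommGroup M] [Module k M] [AddCommGroup N] [Module k N]
    [AddCommGroup P] [Module k P]
    (ρ : M → S → M) (lam : S → N → N) (f : M →ₗ[k] N →ₗ[k] P)
    (hf : ∀ m b n, f (ρ m b) n = f m (lam b n)) :
    BT k ρ lam →ₗ[k] P :=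
  Submodule.liftQ _ (TensorProduct.lift f) (by
    rw [relSub, Submodule.span_le]
    rintro t ⟨m, b, n, rfl⟩
    simp [SetLike.mem_coe, LinearMap.mem_ker, map_sub, hf m b n])
@[simp] theorem btDesc_mk {S M N P : Type} [AddCommGroup M] [Module k M] [AddCommGroup N]
    [Module k N] [AddCommGroup P] [Module k P]
    (ρ : M → S → M) (lam : S → N → N) (f : M →ₗ[k] N →ₗ[k] P)
    (hf : ∀ m b n, f (ρ m b) n = f m (lam b n)) (m : M) (n : N) :
    btDesc k ρ lam f hf (btmk k ρ lam m n) = f m n := by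
  simp [btDesc, btmk, LinearMap.compr₂_apply, TensorProduct.mk_apply]

/-- A diagonal `k`-linear category: a family of (not necessarily commutative,
associative, unital) `k`-algebras indexed by `X`. -/
structure DiagAlg (X : Type) where
  C : X → Type
  [acg : ∀ x, AddCommGroup (C x)]
  [mod : ∀ x, Module k (C x)]
  mul : ∀ {x : X}, C x → C x → C x
  one : ∀ x : X, C x
  add_mul : ∀ {x : X} (a a' b : C x), mul (a + a') b = mul a b + mul a' b
  smul_mul : ∀ {x : X} (c : k) (a b : C x), mul (c • a) b = c • mul a b
  mul_add : ∀ {x : X} (a b b' : C x), mul a (b + b') = mul a b + mul a b'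
  mul_smul : ∀ {x : X} (c : k) (a b : C x), mul a (c • b) = c • mul a b
  mul_assoc : ∀ {x : X} (a b c : C x), mul (mul a b) c = mul a (mul b c)
  one_mul : ∀ {x : X} (a : C x), mul (one x) a = a
  mul_one : ∀ {x : X} (a : C x), mul a (one x) = a

attribute [instance] DiagAlg.acg DiagAlg.mod

variable {k}

/-- A `k`-linear `X`-functor from a diagonal category `B` to `A`: a family of
`k`-algebra maps `i x : B x → A x x`. -/
structure XFun {X : Type} (B : DiagAlg k X) (A : KCat k X) where
  i : ∀ x, B.C x →ₗ[k] A.M x x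
  i_mul : ∀ x (b b' : B.C x), i x (B.mul b b') = A.mul (i x b) (i x b')
  i_one : ∀ x, i x (B.one x) = A.one x

/-- A family of right `B_x`-modules (an object of `D_k(X)` with right `B`-action). -/
structure DModData {X : Type} (B : DiagAlg k X) where
  N : X → Type
  [acg : ∀ x, AddCommGroup (N x)]
  [mod : ∀ x, Module k (N x)]
  ract : ∀ {x : X}, N x → B.C x → N x

attribute [instance] DModData.acg DModData.mod

/-- The axioms making `Nd` an object of `D_k(X)_B`. -/
structure IsDMod {X : Type} {B : DiagAlg k X} (Nd : DModData B) : Prop where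
  add_ract : ∀ {x : X} (n n' : Nd.N x) (b : B.C x), Nd.ract (n + n') b = Nd.ract n b + Nd.ract n' b
  ract_add : ∀ {x : X} (n : Nd.N x) (b b' : B.C x), Nd.ract n (b + b') = Nd.ract n b + Nd.ract n b'
  smul_ract : ∀ {x : X} (c : k) (n : Nd.N x) (b : B.C x), Nd.ract (c • n) b = c • Nd.ract n b
  ract_smul : ∀ {x : X} (c : k) (n : Nd.N x) (b : B.C x), Nd.ract n (c • b) = c • Nd.ract n b
  ract_assoc : ∀ {x : X} (n : Nd.N x) (b b' : B.C x),
    Nd.ract (Nd.ract n b) b' = Nd.ract n (B.mul b b')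
  ract_one : ∀ {x : X} (n : Nd.N x), Nd.ract n (B.one x) = n

/-- Morphisms in `D_k(X)_B`. -/
structure IsDModHom {X : Type} {B : DiagAlg k X} (Nd Nd' : DModData B)
    (g : ∀ x, Nd.N x → Nd'.N x) : Prop where
  map_add : ∀ x (n n' : Nd.N x), g x (n + n') = g x n + g x n'
  map_smul : ∀ x (c : k) (n : Nd.N x), g x (c • n) = c • g x n
  map_ract : ∀ x (n : Nd.N x) (b : B.C x), g x (Nd.ract n b) = Nd'.ract (g x n) b

/-- A right module (in `M_k(X)`) over the `k`-linear category `A` (data only). -/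
structure RModData {X : Type} (A : KCat k X) where
  M : X → X → Type
  [acg : ∀ x y, AddCommGroup (M x y)]
  [mod : ∀ x y, Module k (M x y)]
  act : ∀ {x y z : X}, M x y → A.M y z → M x z

attribute [instance] RModData.acg RModData.mod

/-- The axioms of a right `A`-module. -/
structure IsRMod {X : Type} {A : KCat k X} (Md : RModData A) : Prop where
  add_act : ∀ {x y z : X} (m m' : Md.M x y) (a : A.M y z), Md.act (m + m') a = Md.act m a + Md.act m' a
  act_add : ∀ {x y z : X} (m : Md.M x y) (a a' : A.M y z), Md.act m (a + a') = Md.act m a + Md.act m a'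
  smul_act : ∀ {x y z : X} (c : k) (m : Md.M x y) (a : A.M y z), Md.act (c • m) a = c • Md.act m a
  act_smul : ∀ {x y z : X} (c : k) (m : Md.M x y) (a : A.M y z), Md.act m (c • a) = c • Md.act m a
  act_assoc : ∀ {x y z w : X} (m : Md.M x y) (a : A.M y z) (b : A.M z w),
    Md.act (Md.act m a) b = Md.act m (A.mul a b)
  act_one : ∀ {x y : X} (m : Md.M x y), Md.act m (A.one y) = m

/-- Morphisms of right `A`-modules. -/
structure IsRModHom {X : Type} {A : KCat k X} (Md Md' : RModData A)
    (f : ∀ x y, Md.M x y → Md'.M x y) : Prop where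
  map_add : ∀ x y (m m' : Md.M x y), f x y (m + m') = f x y m + f x y m'
  map_smul : ∀ x y (c : k) (m : Md.M x y), f x y (c • m) = c • f x y m
  map_act : ∀ x y z (m : Md.M x y) (a : A.M y z), f x z (Md.act m a) = Md'.act (f x y m) a

section Descent

variable {X : Type} (A : KCat k X) (B : DiagAlg k X) (F : XFun B A)

/-- `M_{xx} ⊗_{B_x} A_{xy}`, for a right `A`-module `M`, where `B` acts via `i = F.i`. -/
abbrev DTc (Md : RModData A) (x y : X) : Type :=
  BT k (fun (m : Md.M x x) (b : B.C x) => Md.act m (F.i x b))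
       (fun (b : B.C x) (a : A.M x y) => A.mul (F.i x b) a)

abbrev dtmk (Md : RModData A) (x y : X) :
    Md.M x x →ₗ[k] A.M x y →ₗ[k] DTc A B F Md x y :=
  btmk k _ _

/-- Right multiplication by `a : A_{yz}` on the second factor of `M_{xx} ⊗_{B_x} A_{xy}`. -/
def dtRmul (Md : RModData A) {x y z : X} (a : A.M y z) :
    DTc A B F Md x y →ₗ[k] DTc A B F Md x z :=
  btDesc k _ _ ((dtmk A B F Md x z).compl₂ ((A.mulLin x y z).flip a)) (by
    intro m b a'
    simp only [LinearMap.compl₂_apply, LinearMap.flip_apply, KCat.mulLin_apply]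
    rw [A.mul_assoc]
    exact btmk_rel k _ _ m b (A.mul a' a))

@[simp] theorem dtRmul_mk (Md : RModData A) {x y z : X} (a : A.M y z)
    (m : Md.M x x) (a' : A.M x y) :
    dtRmul A B F Md a (dtmk A B F Md x y m a') = dtmk A B F Md x z m (A.mul a' a) := by
  simp [dtRmul]

/-- `(M_{xx} ⊗_{B_x} A_{xx}) ⊗_{B_x} A_{xy}`. -/
abbrev DT2c (Md : RModData A) (x y : X) : Type :=
  BT k (fun (t : DTc A B F Md x x) (b : B.C x) => dtRmul A B F Md (F.i x b) t)
       (fun (b : B.C x) (a : A.M x y) => A.mul (F.i x b) a)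

abbrev dt2mk (Md : RModData A) (x y : X) :
    DTc A B F Md x x →ₗ[k] A.M x y →ₗ[k] DT2c A B F Md x y :=
  btmk k _ _

/-- A descent datum: a right `A`-module together with the maps `σ_{xy}`. -/
structure DescData where
  Md : RModData A
  sig : ∀ (x y : X), Md.M x y → DTc A B F Md x y

/-- The axioms of a descent datum.  The conditions `c2` and `c3` are expressed via
(arbitrary) representatives `σ_{xy}(m) = ∑ⱼ m0 j ⊗ m1 j` of the element `σ_{xy}(m)`
of the balanced tensor product. -/
structure IsDesc (D : DescData A B F) : Prop where
  mod : IsRMod D.Md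
  sig_add : ∀ x y (m m' : D.Md.M x y), D.sig x y (m + m') = D.sig x y m + D.sig x y m'
  sig_smul : ∀ x y (c : k) (m : D.Md.M x y), D.sig x y (c • m) = c • D.sig x y m
  c1 : ∀ x y z (m : D.Md.M x y) (a : A.M y z),
    D.sig x z (D.Md.act m a) = dtRmul A B F D.Md a (D.sig x y m)
  c2 : ∀ x y (m : D.Md.M x y) (n : ℕ) (m0 : Fin n → D.Md.M x x) (m1 : Fin n → A.M x y),
    D.sig x y m = ∑ j, dtmk A B F D.Md x y (m0 j) (m1 j) →
    ∑ j, dt2mk A B F D.Md x y (D.sig x x (m0 j)) (m1 j)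
      = ∑ j, dt2mk A B F D.Md x y (dtmk A B F D.Md x x (m0 j) (A.one x)) (m1 j)
  c3 : ∀ x y (m : D.Md.M x y) (n : ℕ) (m0 : Fin n → D.Md.M x x) (m1 : Fin n → A.M x y),
    D.sig x y m = ∑ j, dtmk A B F D.Md x y (m0 j) (m1 j) →
    ∑ j, D.Md.act (m0 j) (m1 j) = m

/-- Morphisms of descent data. -/
structure IsDescHom (D D' : DescData A B F) (f : ∀ x y, D.Md.M x y → D'.Md.M x y) : Prop where
  mod : IsRModHom D.Md D'.Md f
  compat : ∀ x y (m : D.Md.M x y) (n : ℕ) (m0 : Fin n → D.Md.M x x) (m1 : Fin n → A.M x y),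
    D.sig x y m = ∑ j, dtmk A B F D.Md x y (m0 j) (m1 j) →
    D'.sig x y (f x y m) = ∑ j, dtmk A B F D'.Md x y (f x x (m0 j)) (m1 j)

/-- `G(M)_x = { m ∈ M_{xx} | σ_{xx}(m) = m ⊗ 1_x }`. -/
def Gset (D : DescData A B F) (x : X) : Set (D.Md.M x x) :=
  {m | D.sig x x m = dtmk A B F D.Md x x m (A.one x)}

/-- `N_x ⊗_{B_x} A_{xy}` for a diagonal right `B`-module `N`. -/
abbrev FTc (Nd : DModData B) (x y : X) : Type :=
  BT k (fun (n : Nd.N x) (b : B.C x) => Nd.ract n b)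
       (fun (b : B.C x) (a : A.M x y) => A.mul (F.i x b) a)

abbrev ftmk (Nd : DModData B) (x y : X) :
    Nd.N x →ₗ[k] A.M x y →ₗ[k] FTc A B F Nd x y :=
  btmk k _ _

/-- The right `A`-action `(n ⊗ a)·b := n ⊗ ab` on `F(N)`. -/
def ftRmul (Nd : DModData B) {x y z : X} (a : A.M y z) :
    FTc A B F Nd x y →ₗ[k] FTc A B F Nd x z :=
  btDesc k _ _ ((ftmk A B F Nd x z).compl₂ ((A.mulLin x y z).flip a)) (by
    intro m b a'
    simp only [LinearMap.compl₂_apply, LinearMap.flip_apply, KCat.mulLin_apply]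
    rw [A.mul_assoc]
    exact btmk_rel k _ _ m b (A.mul a' a))

@[simp] theorem ftRmul_mk (Nd : DModData B) {x y z : X} (a : A.M y z)
    (n : Nd.N x) (a' : A.M x y) :
    ftRmul A B F Nd a (ftmk A B F Nd x y n a') = ftmk A B F Nd x z n (A.mul a' a) := by
  simp [ftRmul]

/-- The right `A`-module `F(N)`. -/
def FNMod (Nd : DModData B) : RModData A where
  M := FTc A B F Nd
  act := fun {x y z} t a => ftRmul A B F Nd a t

@[simp] theorem FNMod_act (Nd : DModData B) {x y z : X} (t : FTc A B F Nd x y) (a : A.M y z) :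
    (FNMod A B F Nd).act t a = ftRmul A B F Nd a t := rfl

/-- `n ↦ n ⊗ 1_x` as a linear map `N_x → F(N)_{xx}`. -/
def etaLin (Nd : DModData B) (x : X) : Nd.N x →ₗ[k] FTc A B F Nd x x where
  toFun := fun n => ftmk A B F Nd x x n (A.one x)
  map_add' := by intro n n'; simp [map_add]
  map_smul' := by intro c n; simp [map_smul]

@[simp] theorem etaLin_apply (Nd : DModData B) (x : X) (n : Nd.N x) :
    etaLin A B F Nd x n = ftmk A B F Nd x x n (A.one x) := rfl

/-- The descent map `σ_{xy}(n ⊗ a) = (n ⊗ 1_x) ⊗ a` of `F(N)`. -/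
def FNsig (Nd : DModData B) (x y : X) :
    FTc A B F Nd x y →ₗ[k] DTc A B F (FNMod A B F Nd) x y :=
  btDesc k (fun (n : Nd.N x) (b : B.C x) => Nd.ract n b)
    (fun (b : B.C x) (a : A.M x y) => A.mul (F.i x b) a)
    ((dtmk A B F (FNMod A B F Nd) x y).comp (etaLin A B F Nd x)) (by
    intro n b a
    show (dtmk A B F (FNMod A B F Nd) x y) (ftmk A B F Nd x x (Nd.ract n b) (A.one x)) a
      = (dtmk A B F (FNMod A B F Nd) x y) (ftmk A B F Nd x x n (A.one x)) (A.mul (F.i x b) a)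
    rw [btmk_rel k _ _ n b (A.one x), A.mul_one]
    have h2 := btmk_rel k
      (fun (t : (FNMod A B F Nd).M x x) (b : B.C x) => (FNMod A B F Nd).act t (F.i x b))
      (fun (b : B.C x) (a : A.M x y) => A.mul (F.i x b) a)
      (ftmk A B F Nd x x n (A.one x)) b a
    rw [← h2]
    have h3 : (FNMod A B F Nd).act (ftmk A B F Nd x x n (A.one x)) (F.i x b)
        = ftmk A B F Nd x x n (F.i x b) := by
      show ftRmul A B F Nd (F.i x b) (ftmk A B F Nd x x n (A.one x)) = _
      rw [ftRmul_mk, A.one_mul]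
    rw [h3])

@[simp] theorem FNsig_mk (Nd : DModData B) (x y : X) (n : Nd.N x) (a : A.M x y) :
    FNsig A B F Nd x y (ftmk A B F Nd x y n a)
      = dtmk A B F (FNMod A B F Nd) x y (ftmk A B F Nd x x n (A.one x)) a := rfl

/-- The descent datum `F(N)`. -/
def FNDesc (Nd : DModData B) : DescData A B F where
  Md := FNMod A B F Nd
  sig := fun x y t => FNsig A B F Nd x y t

end Descent

section MapLeft

variable {X : Type}

/-- `g ⊗ id` on balanced tensor products. -/
def btMapLeft {S N N' Q : Type} [AddCommGroup N] [Module k N] [AddCommGroup N'] [Module k N']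
    [AddCommGroup Q] [Module k Q]
    (ρ : N → S → N) (ρ' : N' → S → N') (lam : S → Q → Q)
    (g : N →ₗ[k] N') (hg : ∀ n b, g (ρ n b) = ρ' (g n) b) :
    BT k ρ lam →ₗ[k] BT k ρ' lam :=
  btDesc k ρ lam ((btmk k ρ' lam).comp g) (by
    intro n b q
    simp only [LinearMap.comp_apply, hg]
    exact btmk_rel k ρ' lam (g n) b q)

@[simp] theorem btMapLeft_mk {S N N' Q : Type} [AddCommGroup N] [Module k N] [AddCommGroup N']
    [Module k N'] [AddCommGroup Q] [Module k Q]
    (ρ : N → S → N) (ρ' : N' → S → N') (lam : S → Q → Q)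
    (g : N →ₗ[k] N') (hg : ∀ n b, g (ρ n b) = ρ' (g n) b) (n : N) (q : Q) :
    btMapLeft ρ ρ' lam g hg (btmk k ρ lam n q) = btmk k ρ' lam (g n) q := by
  simp [btMapLeft]

end MapLeft

section Descent2

variable {X : Type} (A : KCat k X) (B : DiagAlg k X) (F : XFun B A)

/-- `F(g) = g ⊗ A` for a morphism `g` of diagonal modules. -/
def FNMap (Nd Nd' : DModData B) (g : ∀ x, Nd.N x →ₗ[k] Nd'.N x)
    (hg : ∀ x (n : Nd.N x) (b : B.C x), g x (Nd.ract n b) = Nd'.ract (g x n) b)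
    (x y : X) : FTc A B F Nd x y →ₗ[k] FTc A B F Nd' x y :=
  btMapLeft _ _ _ (g x) (hg x)

/-- `G(M)_x` as a `k`-submodule of `M_{xx}`. -/
def Gsub (D : DescData A B F) (hD : IsDesc A B F D) (x : X) :
    Submodule k (D.Md.M x x) where
  carrier := Gset A B F D x
  add_mem' := by
    intro a b ha hb
    simp only [Gset, Set.mem_setOf_eq] at *
    rw [hD.sig_add, ha, hb]
    simp [map_add]
  zero_mem' := by
    have h0 : D.sig x x (0 : D.Md.M x x) = 0 := by
      have := hD.sig_smul x x (0 : k) 0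
      simpa using this
    simp only [Gset, Set.mem_setOf_eq, h0, map_zero, LinearMap.zero_apply]
  smul_mem' := by
    intro c m hm
    simp only [Gset, Set.mem_setOf_eq] at *
    rw [hD.sig_smul, hm]
    simp [map_smul]

theorem Gsub_closed (D : DescData A B F) (hD : IsDesc A B F D) (x : X)
    (m : D.Md.M x x) (hm : m ∈ Gsub A B F D hD x) (b : B.C x) :
    D.Md.act m (F.i x b) ∈ Gsub A B F D hD x := by
  have hm' : D.sig x x m = dtmk A B F D.Md x x m (A.one x) := hm
  show D.sig x x (D.Md.act m (F.i x b)) = dtmk A B F D.Md x x (D.Md.act m (F.i x b)) (A.one x)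
  rw [hD.c1, hm', dtRmul_mk, A.one_mul]
  rw [btmk_rel k (fun (m : D.Md.M x x) (b : B.C x) => D.Md.act m (F.i x b))
      (fun (b : B.C x) (a : A.M x x) => A.mul (F.i x b) a) m b (A.one x), A.mul_one]

/-- `G(M)` as a diagonal right `B`-module. -/
def GMod (D : DescData A B F) (hD : IsDesc A B F D) : DModData B where
  N := fun x => ↥(Gsub A B F D hD x)
  ract := fun {x} m b => ⟨D.Md.act m.1 (F.i x b), Gsub_closed A B F D hD x m.1 m.2 b⟩

/-- The counit `ε^M : G(M)_x ⊗_{B_x} A_{xy} → M_{xy}`, `m ⊗ a ↦ ma`. -/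
def epsMap (D : DescData A B F) (hD : IsDesc A B F D) (x y : X) :
    FTc A B F (GMod A B F D hD) x y →ₗ[k] D.Md.M x y :=
  btDesc k
    (fun (m : ↥(Gsub A B F D hD x)) (b : B.C x) =>
      (⟨D.Md.act m.1 (F.i x b), Gsub_closed A B F D hD x m.1 m.2 b⟩ : ↥(Gsub A B F D hD x)))
    (fun (b : B.C x) (a : A.M x y) => A.mul (F.i x b) a)
    (LinearMap.mk₂ k (fun (m : ↥(Gsub A B F D hD x)) (a : A.M x y) => D.Md.act m.1 a)
      (by intro m m' a; exact hD.mod.add_act m.1 m'.1 a)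
      (by intro c m a; exact hD.mod.smul_act c m.1 a)
      (by intro m a a'; exact hD.mod.act_add m.1 a a')
      (by intro c m a; exact hD.mod.act_smul c m.1 a))
    (by intro m b a; exact hD.mod.act_assoc m.1 (F.i x b) a)

@[simp] theorem epsMap_mk (D : DescData A B F) (hD : IsDesc A B F D) (x y : X)
    (m : ↥(Gsub A B F D hD x)) (a : A.M x y) :
    epsMap A B F D hD x y (ftmk A B F (GMod A B F D hD) x y m a) = D.Md.act m.1 a := rfl

/-- The unit `η^N_x : N_x → F(N)_{xx}`, `n ↦ n ⊗ 1_x` (its corestriction to `GF(N)` is the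
unit of the adjunction). -/
def etaMap (Nd : DModData B) (x : X) : Nd.N x → FTc A B F Nd x x :=
  fun n => ftmk A B F Nd x x n (A.one x)

end Descent2

section Flat

variable {X : Type} (B : DiagAlg k X)

/-- The axioms of a right module over the `k`-algebra `B_x`. -/
def IsRModOver (x : X) (N : Type) [AddCommGroup N] [Module k N] (ρ : N → B.C x → N) : Prop :=
  (∀ n n' b, ρ (n + n') b = ρ n b + ρ n' b) ∧
  (∀ n b b', ρ n (b + b') = ρ n b + ρ n b') ∧
  (∀ (c : k) n b, ρ (c • n) b = c • ρ n b) ∧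
  (∀ (c : k) n b, ρ n (c • b) = c • ρ n b) ∧
  (∀ n b b', ρ (ρ n b) b' = ρ n (B.mul b b')) ∧
  (∀ n, ρ n (B.one x) = n)

/-- `Q` (with left `B_x`-action `lam`) is flat as a left `B_x`-module:  `- ⊗_{B_x} Q`
preserves injectivity of morphisms of right `B_x`-modules. -/
def LeftFlat (x : X) (Q : Type) [AddCommGroup Q] [Module k Q] (lam : B.C x → Q → Q) : Prop :=
  ∀ (N N' : Type) [AddCommGroup N] [Module k N] [AddCommGroup N'] [Module k N']
    (ρ : N → B.C x → N) (ρ' : N' → B.C x → N'),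
    IsRModOver B x N ρ → IsRModOver B x N' ρ' →
    ∀ (g : N →ₗ[k] N') (hg : ∀ n b, g (ρ n b) = ρ' (g n) b),
      Function.Injective g → Function.Injective (btMapLeft ρ ρ' lam g hg)

/-- `Q` is faithfully flat as a left `B_x`-module: it is flat, and `N ⊗_{B_x} Q = 0`
forces `N = 0`. -/
def LeftFaithfullyFlat (x : X) (Q : Type) [AddCommGroup Q] [Module k Q]
    (lam : B.C x → Q → Q) : Prop :=
  LeftFlat B x Q lam ∧
  ∀ (N : Type) [AddCommGroup N] [Module k N] (ρ : N → B.C x → N), IsRModOver B x N ρ →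
    (∀ t : BT k ρ lam, t = 0) → ∀ n : N, n = 0

end Flat

section Incl

variable {X : Type} (A : KCat k X) (B : DiagAlg k X) (F : XFun B A)

/-- The inclusion `G(M)_x ⊗_{B_x} A_{xy} → M_{xx} ⊗_{B_x} A_{xy}`. -/
def inclMap (D : DescData A B F) (hD : IsDesc A B F D) (x y : X) :
    FTc A B F (GMod A B F D hD) x y →ₗ[k] DTc A B F D.Md x y :=
  btMapLeft (fun (m : (GMod A B F D hD).N x) (b : B.C x) => (GMod A B F D hD).ract m b)
    (fun (m : D.Md.M x x) (b : B.C x) => D.Md.act m (F.i x b))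
    (fun (b : B.C x) (a : A.M x y) => A.mul (F.i x b) a)
    (Gsub A B F D hD x).subtype (fun n b => rfl)

end Incl

section Cluster

variable {X : Type} (A : KCat k X) (B : DiagAlg k X) (F : XFun B A)

theorem mulZero {x y z : X} (a : A.M x y) : A.mul a (0 : A.M y z) = 0 := by
  have := A.mul_smul (0 : k) a (0 : A.M y z); simpa using this

theorem zeroMul {x y z : X} (b : A.M y z) : A.mul (0 : A.M x y) b = 0 := by
  have := A.smul_mul (0 : k) (0 : A.M x y) b; simpa using this

/-- The endocluster components `𝒜^x_{yz} = {}_{B_x}Hom(A_{xy}, A_{xz})` of left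
`B_x`-linear maps, as a `k`-submodule of the `k`-linear maps. -/
def BLinSub (x y z : X) : Submodule k (A.M x y →ₗ[k] A.M x z) where
  carrier := {f | ∀ (b : B.C x) (a : A.M x y), f (A.mul (F.i x b) a) = A.mul (F.i x b) (f a)}
  add_mem' := by
    intro f g hf hg b a
    simp only [Set.mem_setOf_eq] at hf hg
    simp [LinearMap.add_apply, hf b a, hg b a, A.mul_add]
  zero_mem' := by
    intro b a
    simp [mulZero A]
  smul_mem' := by
    intro c f hf b a
    simp only [Set.mem_setOf_eq] at hf
    simp [LinearMap.smul_apply, hf b a, A.mul_smul]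

/-- Multiplication in the endocluster (opposite composition): `f * g = g ∘ f`. -/
def compBL {x y z w : X} (f : ↥(BLinSub A B F x y z)) (g : ↥(BLinSub A B F x z w)) :
    ↥(BLinSub A B F x y w) :=
  ⟨g.1.comp f.1, by
    intro b a
    have hf : ∀ (b : B.C x) (a : A.M x y), f.1 (A.mul (F.i x b) a) = A.mul (F.i x b) (f.1 a) := f.2
    have hg : ∀ (b : B.C x) (a : A.M x z), g.1 (A.mul (F.i x b) a) = A.mul (F.i x b) (g.1 a) := g.2
    simp [LinearMap.comp_apply, hf b a, hg b (f.1 a)]⟩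

/-- The identity, as the unit of the endocluster. -/
def idBL (x y : X) : ↥(BLinSub A B F x y y) := ⟨LinearMap.id, fun _ _ => rfl⟩

/-- A right module over the endocluster `𝒜 = {}_B End(A)` (data only). -/
structure CModData where
  M : X → X → Type
  [acg : ∀ x y, AddCommGroup (M x y)]
  [mod : ∀ x y, Module k (M x y)]
  act : ∀ {x y z : X}, M x y → ↥(BLinSub A B F x y z) → M x z

attribute [instance] CModData.acg CModData.mod

/-- The axioms of a right `𝒜`-module. -/
structure IsCMod (Md : CModData A B F) : Prop where
  add_act : ∀ {x y z : X} (m m' : Md.M x y) (f : ↥(BLinSub A B F x y z)),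
    Md.act (m + m') f = Md.act m f + Md.act m' f
  act_add : ∀ {x y z : X} (m : Md.M x y) (f f' : ↥(BLinSub A B F x y z)),
    Md.act m (f + f') = Md.act m f + Md.act m f'
  smul_act : ∀ {x y z : X} (c : k) (m : Md.M x y) (f : ↥(BLinSub A B F x y z)),
    Md.act (c • m) f = c • Md.act m f
  act_smul : ∀ {x y z : X} (c : k) (m : Md.M x y) (f : ↥(BLinSub A B F x y z)),
    Md.act m (c • f) = c • Md.act m f
  act_comp : ∀ {x y z w : X} (m : Md.M x y) (f : ↥(BLinSub A B F x y z))
    (g : ↥(BLinSub A B F x z w)), Md.act (Md.act m f) g = Md.act m (compBL A B F f g)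
  act_id : ∀ {x y : X} (m : Md.M x y), Md.act m (idBL A B F x y) = m

/-- Morphisms of right `𝒜`-modules. -/
structure IsCModHom (Md Md' : CModData A B F) (φ : ∀ x y, Md.M x y → Md'.M x y) : Prop where
  map_add : ∀ x y (m m' : Md.M x y), φ x y (m + m') = φ x y m + φ x y m'
  map_smul : ∀ x y (c : k) (m : Md.M x y), φ x y (c • m) = c • φ x y m
  map_act : ∀ x y z (m : Md.M x y) (f : ↥(BLinSub A B F x y z)),
    φ x z (Md.act m f) = Md'.act (φ x y m) f

/-- `M_{xx} ⊗_{B_x} A_{xy} → M_{xz}`, `m₀ ⊗ a ↦ m₀ · f(a)`, for a descent datum. -/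
def HactL (D : DescData A B F) (hD : IsDesc A B F D) {x y z : X}
    (f : ↥(BLinSub A B F x y z)) : DTc A B F D.Md x y →ₗ[k] D.Md.M x z :=
  btDesc k _ _
    (LinearMap.mk₂ k (fun (m0 : D.Md.M x x) (a : A.M x y) => D.Md.act m0 (f.1 a))
      (fun m0 m0' a => hD.mod.add_act m0 m0' (f.1 a))
      (fun c m0 a => hD.mod.smul_act c m0 (f.1 a))
      (by
        intro m0 a a'
        show D.Md.act m0 (f.1 (a + a')) = D.Md.act m0 (f.1 a) + D.Md.act m0 (f.1 a')
        rw [map_add]; exact hD.mod.act_add m0 (f.1 a) (f.1 a'))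
      (by
        intro c m0 a
        show D.Md.act m0 (f.1 (c • a)) = c • D.Md.act m0 (f.1 a)
        rw [map_smul]; exact hD.mod.act_smul c m0 (f.1 a)))
    (by
      intro m0 b a
      show D.Md.act (D.Md.act m0 (F.i x b)) (f.1 a) = D.Md.act m0 (f.1 (A.mul (F.i x b) a))
      have hf : ∀ (b : B.C x) (a : A.M x y), f.1 (A.mul (F.i x b) a) = A.mul (F.i x b) (f.1 a) := f.2
      rw [hf b a]
      exact hD.mod.act_assoc m0 (F.i x b) (f.1 a))

/-- The right cluster action `m · f = m₍₀₎ f(m₍₁₎)` on a descent datum. -/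
def Hact (D : DescData A B F) (hD : IsDesc A B F D) {x y z : X}
    (m : D.Md.M x y) (f : ↥(BLinSub A B F x y z)) : D.Md.M x z :=
  HactL A B F D hD f (D.sig x y m)

/-- The right `𝒜`-module associated to a descent datum (the functor `H` on objects). -/
def HData (D : DescData A B F) (hD : IsDesc A B F D) : CModData A B F where
  M := D.Md.M
  act := fun m f => Hact A B F D hD m f

/-- Right multiplication `r_a` as an element of the endocluster. -/
def rmulBL {x y z : X} (a : A.M y z) : ↥(BLinSub A B F x y z) :=
  ⟨(A.mulLin x y z).flip a, by
    intro b a'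
    show A.mul (A.mul (F.i x b) a') a = A.mul (F.i x b) (A.mul a' a)
    exact A.mul_assoc _ _ _⟩

/-- The right `A`-module underlying a right `𝒜`-module (restriction along `a ↦ r_a`). -/
def KMod (Cd : CModData A B F) : RModData A where
  M := Cd.M
  act := fun m a => Cd.act m (rmulBL A B F a)

/-- `i_x ∘ a*` as an element of the endocluster, for a left `B_x`-linear
`a* : A_{xy} → B_x`. -/
def iestEl {x y : X} (est : A.M x y →ₗ[k] B.C x)
    (hst : ∀ (b : B.C x) (a : A.M x y), est (A.mul (F.i x b) a) = B.mul b (est a)) :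
    ↥(BLinSub A B F x y x) :=
  ⟨(F.i x).comp est, by
    intro b a
    show F.i x (est (A.mul (F.i x b) a)) = A.mul (F.i x b) (F.i x (est a))
    rw [hst b a, F.i_mul]⟩

/-- A choice of finite dual bases exhibiting each `A_{xy}` as a finitely generated
projective left `B_x`-module ("`A` is locally finite as a left `B`-module"). -/
structure DualBasis where
  nb : X → X → ℕ
  e : ∀ x y, Fin (nb x y) → A.M x y
  estar : ∀ x y, Fin (nb x y) → (A.M x y →ₗ[k] B.C x)
  estar_blin : ∀ x y (j : Fin (nb x y)) (b : B.C x) (a : A.M x y),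
    estar x y j (A.mul (F.i x b) a) = B.mul b (estar x y j a)
  dual : ∀ x y (a : A.M x y), (∑ j, A.mul (F.i x (estar x y j a)) (e x y j)) = a

/-- The descent map reconstructed from a right `𝒜`-module via a dual basis
(the functor `K` on objects). -/
def Ksig (Cd : CModData A B F) (db : DualBasis A B F) (x y : X) (m : Cd.M x y) :
    DTc A B F (KMod A B F Cd) x y :=
  ∑ j, dtmk A B F (KMod A B F Cd) x y
    (Cd.act m (iestEl A B F (db.estar x y j) (db.estar_blin x y j))) (db.e x y j)

/-- The descent datum associated to a right `𝒜`-module. -/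
def KDesc (Cd : CModData A B F) (db : DualBasis A B F) : DescData A B F where
  Md := KMod A B F Cd
  sig := fun x y m => Ksig A B F Cd db x y m

end Cluster

section BalancedTensor

variable {S M N P : Type} [AddCommGroup M] [Module k M] [AddCommGroup N] [Module k N]
  [AddCommGroup P] [Module k P] {ρ : M → S → M} {lam : S → N → N}

theorem bt_ext {L L' : BT k ρ lam →ₗ[k] P}
    (h : ∀ m n, L (btmk k ρ lam m n) = L' (btmk k ρ lam m n)) : L = L' :=
  Submodule.linearMap_qext _ (TensorProduct.ext' h)

theorem exists_eq_sum_btmk (t : BT k ρ lam) :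
    ∃ (n : ℕ) (m0 : Fin n → M) (m1 : Fin n → N), t = ∑ j, btmk k ρ lam (m0 j) (m1 j) := by
  obtain ⟨s, rfl⟩ := Submodule.mkQ_surjective _ t
  obtain ⟨T, rfl⟩ := TensorProduct.exists_finset s
  refine ⟨T.card, fun j => (T.equivFin.symm j).1.1, fun j => (T.equivFin.symm j).1.2, ?_⟩
  rw [map_sum, ← Finset.sum_coe_sort T, ← T.equivFin.symm.sum_comp]
  rfl

theorem sum_map_btmk_eq (L : BT k ρ lam →ₗ[k] P) {t : BT k ρ lam} {n : ℕ}
    {m0 : Fin n → M} {m1 : Fin n → N} (ht : t = ∑ j, btmk k ρ lam (m0 j) (m1 j)) :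
    ∑ j, L (btmk k ρ lam (m0 j) (m1 j)) = L t := by
  rw [ht, map_sum]

end BalancedTensor

section Endocluster

variable {X : Type} {A : KCat k X} {B : DiagAlg k X} {F : XFun B A}

theorem dtRmul_add (Md : RModData A) {x y z : X} (a a' : A.M y z) :
    dtRmul A B F Md (x := x) (a + a') = dtRmul A B F Md a + dtRmul A B F Md a' :=
  bt_ext fun m a'' => by simp [A.mul_add]

theorem dtRmul_smul (Md : RModData A) {x y z : X} (c : k) (a : A.M y z) :
    dtRmul A B F Md (x := x) (c • a) = c • dtRmul A B F Md a :=
  bt_ext fun m a' => by simp [A.mul_smul]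

theorem dtRmul_dtRmul (Md : RModData A) {x y z w : X} (a : A.M y z) (a' : A.M z w)
    (t : DTc A B F Md x y) :
    dtRmul A B F Md a' (dtRmul A B F Md a t) = dtRmul A B F Md (A.mul a a') t := by
  have h : dtRmul A B F Md a' ∘ₗ dtRmul A B F Md (x := x) a = dtRmul A B F Md (A.mul a a') :=
    bt_ext fun m a'' => by simp [A.mul_assoc]
  exact LinearMap.congr_fun h t

theorem HactL_add (D : DescData A B F) (hD : IsDesc A B F D) {x y z : X}
    (f f' : ↥(BLinSub A B F x y z)) :
    HactL A B F D hD (f + f') = HactL A B F D hD f + HactL A B F D hD f' :=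
  bt_ext fun m a => hD.mod.act_add m (f.1 a) (f'.1 a)

theorem HactL_smul (D : DescData A B F) (hD : IsDesc A B F D) {x y z : X} (c : k)
    (f : ↥(BLinSub A B F x y z)) :
    HactL A B F D hD (c • f) = c • HactL A B F D hD f :=
  bt_ext fun m a => hD.mod.act_smul c m (f.1 a)

theorem Hact_eq_sum {D : DescData A B F} (hD : IsDesc A B F D) {x y z : X} (m : D.Md.M x y)
    (f : ↥(BLinSub A B F x y z)) {n : ℕ} {m0 : Fin n → D.Md.M x x} {m1 : Fin n → A.M x y}
    (hm : D.sig x y m = ∑ j, dtmk A B F D.Md x y (m0 j) (m1 j)) :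
    Hact A B F D hD m f = ∑ j, D.Md.act (m0 j) (f.1 (m1 j)) :=
  (sum_map_btmk_eq (HactL A B F D hD f) hm).symm

def HactL₂ (D : DescData A B F) (hD : IsDesc A B F D) {x y z w : X}
    (f : ↥(BLinSub A B F x y z)) (g : ↥(BLinSub A B F x z w)) :
    DT2c A B F D.Md x y →ₗ[k] D.Md.M x w :=
  btDesc k _ _
    (LinearMap.mk₂ k (fun t a => HactL A B F D hD g (dtRmul A B F D.Md (f.1 a) t))
      (fun t t' a => by rw [map_add, map_add])
      (fun c t a => by rw [map_smul, map_smul])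
      (fun t a a' => by rw [map_add f.1, dtRmul_add, LinearMap.add_apply, map_add])
      (fun c t a => by rw [map_smul f.1, dtRmul_smul, LinearMap.smul_apply, map_smul]))
    (fun t b a => by
      show HactL A B F D hD g (dtRmul A B F D.Md (f.1 a) (dtRmul A B F D.Md (F.i x b) t))
        = HactL A B F D hD g (dtRmul A B F D.Md (f.1 (A.mul (F.i x b) a)) t)
      rw [dtRmul_dtRmul, f.2 b a])

theorem Hact_Hact {D : DescData A B F} (hD : IsDesc A B F D) {x y z w : X} (m : D.Md.M x y)
    (f : ↥(BLinSub A B F x y z)) (g : ↥(BLinSub A B F x z w)) :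
    Hact A B F D hD (Hact A B F D hD m f) g = Hact A B F D hD m (compBL A B F f g) := by
  obtain ⟨n, m0, m1, hm⟩ := exists_eq_sum_btmk (D.sig x y m)
  -- `c1` rewrites `σ(m · f)` as `HactL₂ f g ((σ ⊗ id) σ(m))`, and `c2` then replaces `σ ⊗ id`
  -- by `m₀ ⊗ a ↦ (m₀ ⊗ 1) ⊗ a`.
  have hsig : D.sig x z (Hact A B F D hD m f)
      = ∑ j, dtRmul A B F D.Md (f.1 (m1 j)) (D.sig x x (m0 j)) := by
    rw [Hact_eq_sum hD m f hm]
    exact (map_sum (AddMonoidHom.mk' _ (hD.sig_add x z)) _ _).trans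
      (Finset.sum_congr rfl fun j _ => hD.c1 x x z (m0 j) (f.1 (m1 j)))
  calc Hact A B F D hD (Hact A B F D hD m f) g
      = HactL₂ D hD f g (∑ j, dt2mk A B F D.Md x y (D.sig x x (m0 j)) (m1 j)) := by
        rw [Hact, hsig, map_sum, map_sum]; rfl
    _ = HactL₂ D hD f g
          (∑ j, dt2mk A B F D.Md x y (dtmk A B F D.Md x x (m0 j) (A.one x)) (m1 j)) := by
        rw [hD.c2 x y m n m0 m1 hm]
    _ = Hact A B F D hD m (compBL A B F f g) := by
        rw [Hact_eq_sum hD m _ hm, map_sum]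
        refine Finset.sum_congr rfl fun j _ => ?_
        show HactL A B F D hD g
          (dtRmul A B F D.Md (f.1 (m1 j)) (dtmk A B F D.Md x x (m0 j) (A.one x))) = _
        rw [dtRmul_mk, A.one_mul]
        rfl

theorem Hact_idBL {D : DescData A B F} (hD : IsDesc A B F D) {x y : X} (m : D.Md.M x y) :
    Hact A B F D hD m (idBL A B F x y) = m := by
  obtain ⟨n, m0, m1, hm⟩ := exists_eq_sum_btmk (D.sig x y m)
  rw [Hact_eq_sum hD m _ hm]
  exact hD.c3 x y m n m0 m1 hm

theorem Hact_rmulBL {D : DescData A B F} (hD : IsDesc A B F D) {x y z : X} (m : D.Md.M x y)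
    (a : A.M y z) : Hact A B F D hD m (rmulBL A B F a) = D.Md.act m a := by
  obtain ⟨n, m0, m1, hm⟩ := exists_eq_sum_btmk (D.sig x y m)
  calc Hact A B F D hD m (rmulBL A B F a)
      = ∑ j, D.Md.act (D.Md.act (m0 j) (m1 j)) a :=
        (Hact_eq_sum hD m _ hm).trans
          (Finset.sum_congr rfl fun j _ => (hD.mod.act_assoc (m0 j) (m1 j) a).symm)
    _ = D.Md.act (∑ j, D.Md.act (m0 j) (m1 j)) a :=
        (map_sum (AddMonoidHom.mk' (D.Md.act · a) fun m m' => hD.mod.add_act m m' a) _ _).symm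
    _ = D.Md.act m a := by rw [hD.c3 x y m n m0 m1 hm]

theorem isCMod_HData {D : DescData A B F} (hD : IsDesc A B F D) :
    IsCMod A B F (HData A B F D hD) where
  add_act {x y _} m m' f := by
    show HactL A B F D hD f (D.sig x y (m + m')) = _
    exact (congrArg _ (hD.sig_add x y m m')).trans (map_add _ _ _)
  act_add {x y _} m f f' := by
    show HactL A B F D hD (f + f') (D.sig x y m) = _
    rw [HactL_add]
    rfl
  smul_act {x y _} c m f := by
    show HactL A B F D hD f (D.sig x y (c • m)) = _
    exact (congrArg _ (hD.sig_smul x y c m)).trans (map_smul _ _ _)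
  act_smul {x y _} c m f := by
    show HactL A B F D hD (c • f) (D.sig x y m) = _
    rw [HactL_smul]
    rfl
  act_comp m f g := Hact_Hact hD m f g
  act_id m := Hact_idBL hD m

theorem isCModHom_HData {D D' : DescData A B F} (hD : IsDesc A B F D) (hD' : IsDesc A B F D')
    {f : ∀ x y, D.Md.M x y → D'.Md.M x y} (hf : IsDescHom A B F D D' f) :
    IsCModHom A B F (HData A B F D hD) (HData A B F D' hD') f where
  map_add := hf.mod.map_add
  map_smul := hf.mod.map_smul
  map_act x y z m g := by
    obtain ⟨n, m0, m1, hm⟩ := exists_eq_sum_btmk (D.sig x y m)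
    show f x z (Hact A B F D hD m g) = Hact A B F D' hD' (f x y m) g
    rw [Hact_eq_sum hD m g hm, Hact_eq_sum hD' (f x y m) g (hf.compat x y m n m0 m1 hm)]
    exact (map_sum (AddMonoidHom.mk' (f x z) (hf.mod.map_add x z)) _ _).trans
      (Finset.sum_congr rfl fun j _ => hf.mod.map_act x x z (m0 j) (g.1 (m1 j)))

theorem rmulBL_add {x y z : X} (a a' : A.M y z) :
    rmulBL A B F (x := x) (a + a') = rmulBL A B F a + rmulBL A B F a' :=
  Subtype.ext (map_add (A.mulLin x y z).flip a a')

theorem rmulBL_smul {x y z : X} (c : k) (a : A.M y z) :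
    rmulBL A B F (x := x) (c • a) = c • rmulBL A B F a :=
  Subtype.ext (map_smul (A.mulLin x y z).flip c a)

theorem compBL_rmulBL {x y z w : X} (a : A.M y z) (a' : A.M z w) :
    compBL A B F (rmulBL A B F (x := x) a) (rmulBL A B F a') = rmulBL A B F (A.mul a a') :=
  Subtype.ext (LinearMap.ext fun c => A.mul_assoc c a a')

theorem rmulBL_one {x y : X} : rmulBL A B F (x := x) (A.one y) = idBL A B F x y :=
  Subtype.ext (LinearMap.ext fun c => A.mul_one c)

theorem isRMod_KMod {Cd : CModData A B F} (hC : IsCMod A B F Cd) :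
    IsRMod (KMod A B F Cd) where
  add_act m m' a := hC.add_act m m' (rmulBL A B F a)
  act_add m a a' := (congrArg (Cd.act m) (rmulBL_add a a')).trans (hC.act_add m _ _)
  smul_act c m a := hC.smul_act c m (rmulBL A B F a)
  act_smul c m a := (congrArg (Cd.act m) (rmulBL_smul c a)).trans (hC.act_smul c m _)
  act_assoc m a a' := (hC.act_comp m _ _).trans (congrArg (Cd.act m) (compBL_rmulBL a a'))
  act_one m := (congrArg (Cd.act m) rmulBL_one).trans (hC.act_id m)

theorem IsCMod.act_sum {Cd : CModData A B F} (hC : IsCMod A B F Cd) {x y z : X} (m : Cd.M x y)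
    {n : ℕ} (f : Fin n → ↥(BLinSub A B F x y z)) :
    Cd.act m (∑ i, f i) = ∑ i, Cd.act m (f i) :=
  map_sum (AddMonoidHom.mk' (Cd.act m) (hC.act_add m)) f Finset.univ

def DualBasis.coord (db : DualBasis A B F) (x y : X) (j : Fin (db.nb x y)) :
    ↥(BLinSub A B F x y x) :=
  iestEl A B F (db.estar x y j) (db.estar_blin x y j)

theorem DualBasis.sum_compBL_coord (db : DualBasis A B F) {x y z : X}
    (f : ↥(BLinSub A B F x y z)) :
    ∑ j, compBL A B F (db.coord x y j) (rmulBL A B F (f.1 (db.e x y j))) = f := by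
  refine Subtype.ext (LinearMap.ext fun c => ?_)
  rw [AddSubmonoidClass.coe_finsetSum, LinearMap.sum_apply]
  calc ∑ j, A.mul (F.i x (db.estar x y j c)) (f.1 (db.e x y j))
      = ∑ j, f.1 (A.mul (F.i x (db.estar x y j c)) (db.e x y j)) :=
        Finset.sum_congr rfl fun j _ => (f.2 _ _).symm
    _ = f.1 c := by rw [← map_sum, db.dual]

theorem IsCMod.act_eq_sum_coord {Cd : CModData A B F} (hC : IsCMod A B F Cd)
    (db : DualBasis A B F) {x y z : X} (m : Cd.M x y) (f : ↥(BLinSub A B F x y z)) :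
    Cd.act m f = ∑ j, Cd.act (Cd.act m (db.coord x y j)) (rmulBL A B F (f.1 (db.e x y j))) := by
  simp only [hC.act_comp]
  rw [← hC.act_sum, db.sum_compBL_coord]

theorem Ksig_act {Cd : CModData A B F} (hC : IsCMod A B F Cd) (db : DualBasis A B F)
    {x y z : X} (m : Cd.M x y) (f : ↥(BLinSub A B F x y z)) :
    Ksig A B F Cd db x z (Cd.act m f)
      = ∑ i, dtmk A B F (KMod A B F Cd) x z (Cd.act m (db.coord x y i)) (f.1 (db.e x y i)) := by
  calc Ksig A B F Cd db x z (Cd.act m f)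
      = ∑ j, ∑ i, dtmk A B F (KMod A B F Cd) x z
          ((KMod A B F Cd).act (Cd.act m (db.coord x y i))
            (F.i x (db.estar x z j (f.1 (db.e x y i))))) (db.e x z j) := by
        refine Finset.sum_congr rfl fun j _ => ?_
        rw [hC.act_comp, hC.act_eq_sum_coord db m]
        exact map_sum ((dtmk A B F (KMod A B F Cd) x z).flip (db.e x z j)) _ _
    _ = ∑ i, ∑ j, dtmk A B F (KMod A B F Cd) x z (Cd.act m (db.coord x y i))
          (A.mul (F.i x (db.estar x z j (f.1 (db.e x y i)))) (db.e x z j)) := by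
        rw [Finset.sum_comm]
        exact Finset.sum_congr rfl fun i _ => Finset.sum_congr rfl fun j _ => btmk_rel k _ _ _ _ _
    _ = _ := Finset.sum_congr rfl fun i _ => by rw [← map_sum, db.dual]

theorem Ksig_add {Cd : CModData A B F} (hC : IsCMod A B F Cd) (db : DualBasis A B F)
    {x y : X} (m m' : Cd.M x y) :
    Ksig A B F Cd db x y (m + m') = Ksig A B F Cd db x y m + Ksig A B F Cd db x y m' := by
  simp only [Ksig, hC.add_act, ← Finset.sum_add_distrib]
  exact Finset.sum_congr rfl fun j _ => LinearMap.map_add₂ _ _ _ _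

theorem Ksig_smul {Cd : CModData A B F} (hC : IsCMod A B F Cd) (db : DualBasis A B F)
    {x y : X} (c : k) (m : Cd.M x y) :
    Ksig A B F Cd db x y (c • m) = c • Ksig A B F Cd db x y m := by
  simp only [Ksig, hC.smul_act, Finset.smul_sum]
  exact Finset.sum_congr rfl fun j _ => LinearMap.map_smul₂ _ _ _ _

def KsigL {Cd : CModData A B F} (hC : IsCMod A B F Cd) (db : DualBasis A B F) (x y : X) :
    Cd.M x y →ₗ[k] DTc A B F (KMod A B F Cd) x y where
  toFun := Ksig A B F Cd db x y
  map_add' := Ksig_add hC db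
  map_smul' := Ksig_smul hC db

theorem Ksig_rmulBL {Cd : CModData A B F} (hC : IsCMod A B F Cd) (db : DualBasis A B F)
    {x y z : X} (m : Cd.M x y) (a : A.M y z) :
    Ksig A B F Cd db x z ((KMod A B F Cd).act m a)
      = dtRmul A B F (KMod A B F Cd) a (Ksig A B F Cd db x y m) := by
  rw [Ksig, map_sum]
  exact (Ksig_act hC db m (rmulBL A B F a)).trans
    (Finset.sum_congr rfl fun i _ => (dtRmul_mk A B F _ a _ _).symm)

theorem Ksig_act_iestEl {Cd : CModData A B F} (hC : IsCMod A B F Cd) (db : DualBasis A B F)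
    {x y : X} (m : Cd.M x y) (est : A.M x y →ₗ[k] B.C x)
    (hest : ∀ b a, est (A.mul (F.i x b) a) = B.mul b (est a)) :
    Ksig A B F Cd db x x (Cd.act m (iestEl A B F est hest))
      = dtmk A B F (KMod A B F Cd) x x (Cd.act m (iestEl A B F est hest)) (A.one x) := by
  rw [Ksig_act hC db, hC.act_eq_sum_coord db m]
  refine (Finset.sum_congr rfl fun i _ => ?_).trans
    (map_sum ((dtmk A B F (KMod A B F Cd) x x).flip (A.one x)) _ _).symm
  show dtmk A B F (KMod A B F Cd) x x _ (F.i x (est (db.e x y i))) = _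
  exact (congrArg _ (A.mul_one _).symm).trans (btmk_rel k _ _ _ _ _).symm

def sigTensor (Md : RModData A) {x : X} (σ : Md.M x x →ₗ[k] DTc A B F Md x x)
    (hσ : ∀ m b, σ (Md.act m (F.i x b)) = dtRmul A B F Md (F.i x b) (σ m)) (y : X) :
    DTc A B F Md x y →ₗ[k] DT2c A B F Md x y :=
  btDesc k _ _ (dt2mk A B F Md x y ∘ₗ σ) fun m b a => by
    simp only [LinearMap.comp_apply, hσ]
    exact btmk_rel k _ _ (σ m) b a

def unitTensor (Md : RModData A) (x y : X) : DTc A B F Md x y →ₗ[k] DT2c A B F Md x y :=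
  btDesc k _ _ (dt2mk A B F Md x y ∘ₗ (dtmk A B F Md x x).flip (A.one x)) fun m b a => by
    show dt2mk A B F Md x y (dtmk A B F Md x x (Md.act m (F.i x b)) (A.one x)) a
      = dt2mk A B F Md x y (dtmk A B F Md x x m (A.one x)) (A.mul (F.i x b) a)
    rw [btmk_rel, A.mul_one, ← btmk_rel, dtRmul_mk, A.one_mul]

def dtAct (Md : RModData A) (hM : IsRMod Md) (x y : X) : DTc A B F Md x y →ₗ[k] Md.M x y :=
  btDesc k _ _ (LinearMap.mk₂ k Md.act hM.add_act hM.smul_act hM.act_add hM.act_smul)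
    fun m b a => hM.act_assoc m (F.i x b) a

theorem sigTensor_Ksig {Cd : CModData A B F} (hC : IsCMod A B F Cd) (db : DualBasis A B F)
    {x y : X} (m : Cd.M x y) :
    sigTensor (KMod A B F Cd) (KsigL hC db x x) (fun m b => Ksig_rmulBL hC db m (F.i x b)) y
        (Ksig A B F Cd db x y m)
      = unitTensor (KMod A B F Cd) x y (Ksig A B F Cd db x y m) := by
  rw [Ksig, map_sum, map_sum]
  refine Finset.sum_congr rfl fun j _ => ?_
  show dt2mk A B F _ x y (Ksig A B F Cd db x x (Cd.act m (db.coord x y j))) (db.e x y j) = _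
  rw [DualBasis.coord, Ksig_act_iestEl hC db]
  rfl

theorem dtAct_Ksig {Cd : CModData A B F} (hC : IsCMod A B F Cd) (db : DualBasis A B F)
    {x y : X} (m : Cd.M x y) :
    dtAct (KMod A B F Cd) (isRMod_KMod hC) x y (Ksig A B F Cd db x y m) = m := by
  rw [Ksig, map_sum]
  exact (hC.act_eq_sum_coord db m (idBL A B F x y)).symm.trans (hC.act_id m)

theorem isDesc_KDesc {Cd : CModData A B F} (hC : IsCMod A B F Cd) (db : DualBasis A B F) :
    IsDesc A B F (KDesc A B F Cd db) where
  mod := isRMod_KMod hC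
  sig_add _ _ := Ksig_add hC db
  sig_smul _ _ := Ksig_smul hC db
  c1 _ _ _ := Ksig_rmulBL hC db
  c2 _ _ m _ _ _ hm :=
    (sum_map_btmk_eq _ hm).trans ((sigTensor_Ksig hC db m).trans (sum_map_btmk_eq _ hm).symm)
  c3 _ _ m _ _ _ hm := (sum_map_btmk_eq _ hm).trans (dtAct_Ksig hC db m)

theorem isDescHom_KDesc {Cd Cd' : CModData A B F} (db : DualBasis A B F)
    {φ : ∀ x y, Cd.M x y → Cd'.M x y} (hφ : IsCModHom A B F Cd Cd' φ) :
    IsDescHom A B F (KDesc A B F Cd db) (KDesc A B F Cd' db) φ where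
  mod := ⟨hφ.map_add, hφ.map_smul, fun x y z m a => hφ.map_act x y z m (rmulBL A B F a)⟩
  compat x y m n m0 m1 hm := by
    let φx : Cd.M x x →ₗ[k] Cd'.M x x := ⟨⟨φ x x, hφ.map_add x x⟩, hφ.map_smul x x⟩
    let φA : DTc A B F (KMod A B F Cd) x y →ₗ[k] DTc A B F (KMod A B F Cd') x y :=
      btMapLeft (fun u b => (KMod A B F Cd).act u (F.i x b))
        (fun u b => (KMod A B F Cd').act u (F.i x b))
          (fun (b : B.C x) (a : A.M x y) => A.mul (F.i x b) a) φx
        fun u b => hφ.map_act x x x u (rmulBL A B F (F.i x b))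
    have hφA : Ksig A B F Cd' db x y (φ x y m) = φA (Ksig A B F Cd db x y m) := by
      unfold Ksig
      rw [map_sum]
      refine Finset.sum_congr rfl fun j _ => ?_
      exact congrArg (dtmk A B F (KMod A B F Cd') x y · _) (hφ.map_act x y x m _).symm
    exact hφA.trans (sum_map_btmk_eq φA hm).symm

theorem Hact_KDesc {Cd : CModData A B F} (hC : IsCMod A B F Cd) (db : DualBasis A B F)
    (hK : IsDesc A B F (KDesc A B F Cd db)) {x y z : X} (m : Cd.M x y)
    (f : ↥(BLinSub A B F x y z)) :
    Hact A B F (KDesc A B F Cd db) hK m f = Cd.act m f := by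
  show HactL A B F _ hK f (Ksig A B F Cd db x y m) = _
  rw [Ksig]
  exact (map_sum _ _ _).trans (hC.act_eq_sum_coord db m f).symm

theorem sum_dtmk_HactL_coord {D : DescData A B F} (hD : IsDesc A B F D) (db : DualBasis A B F)
    {x y : X} (t : DTc A B F D.Md x y) :
    ∑ j, dtmk A B F D.Md x y (HactL A B F D hD (db.coord x y j) t) (db.e x y j) = t := by
  have h : ∑ j, (dtmk A B F D.Md x y).flip (db.e x y j) ∘ₗ HactL A B F D hD (db.coord x y j)
      = LinearMap.id := bt_ext fun m a => by
    rw [LinearMap.sum_apply, LinearMap.id_apply]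
    conv_rhs => rw [← db.dual x y a, map_sum]
    exact Finset.sum_congr rfl fun j _ => btmk_rel k _ _ _ _ _
  exact (LinearMap.sum_apply _ _ _).symm.trans (LinearMap.congr_fun h t)

end Endocluster

/-- **Statement 14** (Theorem 5.3): if `A` is locally finite as a left `B`-module
(witnessed by a choice `db` of dual bases), then the category of descent data
`Desc_B(A)` and the category `M_𝒜` of right modules over the endocluster
`𝒜 = {}_B End(A)` are isomorphic, via `H(M, σ) = M` with `m · f = m₍₀₎ f(m₍₁₎)`,
with inverse `K` defined by `σ_{xy}(m) = ∑ᵢ m·(i_x ∘ eᵢ*) ⊗ eᵢ`. -/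
theorem stmt14 {k X : Type} [CommRing k] (A : KCat k X) (B : DiagAlg k X) (F : XFun B A)
    (db : DualBasis A B F) :
    -- H is well defined on objects
    (∀ (D : DescData A B F) (hD : IsDesc A B F D), IsCMod A B F (HData A B F D hD))
    ∧
    -- H is well defined on morphisms (it is the identity on underlying maps)
    (∀ (D D' : DescData A B F) (hD : IsDesc A B F D) (hD' : IsDesc A B F D')
      (f : ∀ x y, D.Md.M x y → D'.Md.M x y), IsDescHom A B F D D' f →
      IsCModHom A B F (HData A B F D hD) (HData A B F D' hD') f)
    ∧
    -- K is well defined on objects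
    (∀ (Cd : CModData A B F), IsCMod A B F Cd → IsDesc A B F (KDesc A B F Cd db))
    ∧
    -- K is well defined on morphisms (it is the identity on underlying maps)
    (∀ (Cd Cd' : CModData A B F), IsCMod A B F Cd → IsCMod A B F Cd' →
      ∀ (φ : ∀ x y, Cd.M x y → Cd'.M x y), IsCModHom A B F Cd Cd' φ →
      IsDescHom A B F (KDesc A B F Cd db) (KDesc A B F Cd' db) φ)
    ∧
    -- K ∘ H = id : the reconstructed descent map agrees with the original one
    (∀ (D : DescData A B F) (hD : IsDesc A B F D) (x y : X) (m : D.Md.M x y),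
      (∑ j, dtmk A B F D.Md x y
          (Hact A B F D hD m (iestEl A B F (db.estar x y j) (db.estar_blin x y j)))
          (db.e x y j))
        = D.sig x y m)
    ∧
    -- K ∘ H = id : the `A`-action obtained by restricting the cluster action along
    -- `a ↦ r_a` agrees with the original `A`-action
    (∀ (D : DescData A B F) (hD : IsDesc A B F D) (x y z : X) (m : D.Md.M x y)
      (a : A.M y z), Hact A B F D hD m (rmulBL A B F a) = D.Md.act m a)
    ∧
    -- H ∘ K = id : the cluster action obtained from the reconstructed descent datum
    -- agrees with the original cluster action
    (∀ (Cd : CModData A B F) (hC : IsCMod A B F Cd)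
      (hK : IsDesc A B F (KDesc A B F Cd db)) (x y z : X) (m : Cd.M x y)
      (f : ↥(BLinSub A B F x y z)),
      Hact A B F (KDesc A B F Cd db) hK m f = Cd.act m f) :=
  ⟨fun _ hD => isCMod_HData hD,
    fun _ _ hD hD' _ hf => isCModHom_HData hD hD' hf,
    fun _ hC => isDesc_KDesc hC db,
    fun _ _ _ _ _ hφ => isDescHom_KDesc db hφ,
    fun D hD x y m => sum_dtmk_HactL_coord hD db (D.sig x y m),
    fun _ hD _ _ _ m a => Hact_rmulBL hD m a,
    fun _ hC hK _ _ _ m f => Hact_KDesc hC db hK m f⟩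

end Paper
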